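/- arXiv:1811.07185 — 5 statements merged into one kernel-verified Lean document; each statement's English description precedes it below -/
import Mathlib

section
/- Let λ > 0, h > 0, a = √(λ/2), and define R(v) = sinh((h−v)a)/sinh(ha) and Q(v) = cosh((h−v)a)/(√(2λ)·sinh(ha)) − I₀(v·a)/(√(2λ)·sinh(ha)·I₀(h·a)). Then Q satisfies the inhomogeneous ODE 2v·Q''(v) + 2Q'(v) − λ·v·Q(v) = −R(v) for all v ∈ (0,h), with boundary condition Q(h) = 0. -/
/-- The modified Bessel function of the first kind of order 0. -/
noncomputable def besselI0 (x : ℝ) : ℝ := ∑' m : ℕ, (x / 2) ^ (2 * m) / (Nat.factorial m : ℝ) ^ 2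

/-!
Differentiating the series term by term gives `I₀' = I₁` and `(x I₁)' = x I₀`, hence
`I₁' = I₀ - I₁ / x` away from `0`. So `v ↦ I₀ (v a)` solves the homogeneous equation
`2 v y'' + 2 y' - 2 a² v y = 0`, while `v ↦ cosh ((h - v) a)` leaves the remainder
`-2 a sinh ((h - v) a)`. With `λ = 2 a²` and `√(2 λ) = 2 a` this remainder is `-R`, and at `v = h`
the two terms of `Q` cancel because `cosh 0 = 1`.
-/

open scoped Nat

noncomputable def besselI1 (x : ℝ) : ℝ := ∑' m : ℕ, (x / 2) ^ (2 * m + 1) / (m ! * (m + 1)! : ℝ)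

theorem hasDerivAt_tsum_of_bound_on_balls {𝕜 F : Type*} [RCLike 𝕜] [NormedAddCommGroup F]
    [NormedSpace 𝕜 F] [CompleteSpace F] {g g' : ℕ → 𝕜 → F}
    (hg : ∀ n y, HasDerivAt (g n) (g' n y) y) (hg0 : Summable fun n => g n 0)
    (hbound : ∀ r : ℝ, ∃ u : ℕ → ℝ, Summable u ∧ ∀ n y, ‖y‖ < r → ‖g' n y‖ ≤ u n) (x : 𝕜) :
    HasDerivAt (fun y => ∑' n, g n y) (∑' n, g' n x) x := by
  obtain ⟨u, hu, hgu⟩ := hbound (‖x‖ + 1)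
  exact hasDerivAt_tsum_of_isPreconnected hu Metric.isOpen_ball
    (convex_ball 0 (‖x‖ + 1)).isPreconnected (fun n y _ => hg n y)
    (fun n y hy => hgu n y (mem_ball_zero_iff.mp hy)) (Metric.mem_ball_self (by positivity)) hg0
    (mem_ball_zero_iff.mpr (lt_add_one _))

theorem abs_half_le_half_of_abs_lt {y r : ℝ} (hy : |y| < r) : |y / 2| ≤ r / 2 := by
  rw [abs_div, abs_two]; linarith

theorem factorial_le_factorial_sq (m : ℕ) : (m ! : ℝ) ≤ (m ! : ℝ) ^ 2 :=
  le_self_pow₀ (by exact_mod_cast m.factorial_pos) two_ne_zero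

theorem abs_pow_div_le_pow_div_factorial {y r d : ℝ} (hy : |y| ≤ r) (k m : ℕ)
    (hd : (m ! : ℝ) ≤ d) : |y ^ k / d| ≤ r ^ k / m ! := by
  have hm : (0 : ℝ) < m ! := by positivity
  rw [abs_div, abs_pow, abs_of_pos (hm.trans_le hd)]
  exact div_le_div₀ (pow_nonneg ((abs_nonneg y).trans hy) k)
    (pow_le_pow_left₀ (abs_nonneg y) hy k) hm hd

theorem summable_pow_two_mul_add_one_div_factorial (s : ℝ) :
    Summable fun m : ℕ => s ^ (2 * m + 1) / m ! := by
  refine ((Real.summable_pow_div_factorial (s ^ 2)).mul_left s).congr fun m => ?_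
  rw [pow_succ s (2 * m), pow_mul]
  ring

theorem summable_besselI0_terms (x : ℝ) :
    Summable fun m : ℕ => (x / 2) ^ (2 * m) / (m ! : ℝ) ^ 2 := by
  refine (Real.summable_pow_div_factorial (|x / 2| ^ 2)).of_norm_bounded fun m => ?_
  rw [Real.norm_eq_abs, ← pow_mul]
  exact abs_pow_div_le_pow_div_factorial le_rfl _ m (factorial_le_factorial_sq m)

theorem besselI0_pos (x : ℝ) : 0 < besselI0 x := by
  refine (summable_besselI0_terms x).tsum_pos (fun m => ?_) 0 (by simp)
  rw [pow_mul]
  positivity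

theorem hasDerivAt_half_pow_succ_div (n : ℕ) (c x : ℝ) :
    HasDerivAt (fun y => (y / 2) ^ (n + 1) / c) ((n + 1) * (x / 2) ^ n / (2 * c)) x := by
  refine ((((hasDerivAt_id' x).div_const 2).fun_pow (n + 1)).div_const c).congr_deriv ?_
  rw [add_tsub_cancel_right]
  push_cast
  ring

theorem hasDerivAt_besselI0_term (m : ℕ) (x : ℝ) :
    HasDerivAt (fun y => (y / 2) ^ (2 * m + 1 + 1) / ((m + 1)! : ℝ) ^ 2)
      ((x / 2) ^ (2 * m + 1) / (m ! * (m + 1)! : ℝ)) x := by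
  refine (hasDerivAt_half_pow_succ_div _ _ x).congr_deriv ?_
  rw [Nat.factorial_succ]
  push_cast
  field_simp
  ring

theorem hasDerivAt_besselI0 (x : ℝ) : HasDerivAt besselI0 (besselI1 x) x := by
  -- splitting off the constant term keeps the exponents free of natural-number subtraction
  have hshift : besselI0 =
      fun y => 1 + ∑' m : ℕ, (y / 2) ^ (2 * m + 1 + 1) / ((m + 1)! : ℝ) ^ 2 := by
    funext y
    rw [besselI0, (summable_besselI0_terms y).tsum_eq_zero_add]
    simp [mul_add]
  rw [hshift]
  refine (hasDerivAt_tsum_of_bound_on_balls hasDerivAt_besselI0_term (by simp)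
    (fun r => ⟨_, summable_pow_two_mul_add_one_div_factorial (r / 2), fun m y hy => ?_⟩)
    x).const_add 1
  exact abs_pow_div_le_pow_div_factorial (abs_half_le_half_of_abs_lt hy) _ m
    (le_mul_of_one_le_right (by positivity) (by exact_mod_cast (m + 1).factorial_pos))

theorem hasDerivAt_mul_besselI1_term (m : ℕ) (x : ℝ) :
    HasDerivAt (fun y => (y / 2) ^ (2 * m + 1 + 1) / (m ! * (m + 1)! / 2 : ℝ))
      (x * ((x / 2) ^ (2 * m) / (m ! : ℝ) ^ 2)) x := by
  refine (hasDerivAt_half_pow_succ_div _ _ x).congr_deriv ?_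
  rw [Nat.factorial_succ, pow_succ]
  push_cast
  field_simp
  ring

theorem hasDerivAt_mul_besselI1 (x : ℝ) :
    HasDerivAt (fun y => y * besselI1 y) (x * besselI0 x) x := by
  have hseries : (fun y => y * besselI1 y) =
      fun y => ∑' m : ℕ, (y / 2) ^ (2 * m + 1 + 1) / (m ! * (m + 1)! / 2 : ℝ) := by
    funext y
    rw [besselI1, ← tsum_mul_left]
    congr 1
    funext m
    rw [pow_succ (y / 2) (2 * m + 1)]
    field_simp
  rw [hseries, besselI0, ← tsum_mul_left]
  refine hasDerivAt_tsum_of_bound_on_balls hasDerivAt_mul_besselI1_term (by simp)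
    (fun r => ⟨_, (Real.summable_pow_div_factorial ((r / 2) ^ 2)).mul_left r,
      fun m y hy => ?_⟩) x
  simp only [Real.norm_eq_abs, abs_mul, ← pow_mul]
  exact mul_le_mul hy.le (abs_pow_div_le_pow_div_factorial (abs_half_le_half_of_abs_lt hy) _ m
    (factorial_le_factorial_sq m)) (abs_nonneg _) ((abs_nonneg y).trans hy.le)

theorem hasDerivAt_besselI1 {x : ℝ} (hx : x ≠ 0) :
    HasDerivAt besselI1 (besselI0 x - besselI1 x / x) x := by
  have hquot : (fun y => y * besselI1 y / y) =ᶠ[nhds x] besselI1 := by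
    filter_upwards [eventually_ne_nhds hx] with y hy
    field_simp
  refine (((hasDerivAt_mul_besselI1 x).div (hasDerivAt_id' x) hx).congr_of_eventuallyEq
    hquot.symm).congr_deriv ?_
  field_simp

theorem cosh_sub_besselI0_ode {Q : ℝ → ℝ} {a h A B v : ℝ}
    (hQ : ∀ v, Q v = A * Real.cosh ((h - v) * a) - B * besselI0 (v * a)) (ha : a ≠ 0)
    (hv : v ≠ 0) :
    2 * v * deriv (deriv Q) v + 2 * deriv Q v - 2 * a ^ 2 * v * Q v
      = -2 * a * A * Real.sinh ((h - v) * a) := by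
  obtain rfl : Q = _ := funext hQ
  have hdQ : deriv (fun v => A * Real.cosh ((h - v) * a) - B * besselI0 (v * a))
      = fun v => -a * A * Real.sinh ((h - v) * a) - a * B * besselI1 (v * a) := by
    funext x
    refine ((((((hasDerivAt_id' x).const_sub h).mul_const a).cosh.const_mul A).fun_sub
      (((hasDerivAt_besselI0 _).comp x (hasDerivAt_mul_const a)).const_mul B)).congr_deriv
      ?_).deriv
    ring
  have hd2Q : HasDerivAt (fun v => -a * A * Real.sinh ((h - v) * a) - a * B * besselI1 (v * a))
      (a ^ 2 * A * Real.cosh ((h - v) * a)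
        - a ^ 2 * B * (besselI0 (v * a) - besselI1 (v * a) / (v * a))) v :=
    (((((hasDerivAt_id' v).const_sub h).mul_const a).sinh.const_mul (-a * A)).fun_sub
      (((hasDerivAt_besselI1 (mul_ne_zero hv ha)).comp v
        (hasDerivAt_mul_const a)).const_mul (a * B))).congr_deriv (by ring)
  rw [hdQ, hd2Q.deriv]
  field_simp
  ring

theorem stmt2 (lam h : ℝ) (hlam : 0 < lam) (hh : 0 < h) :
    let a := Real.sqrt (lam / 2)
    let R : ℝ → ℝ := fun v => Real.sinh ((h - v) * a) / Real.sinh (h * a)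
    let Q : ℝ → ℝ := fun v =>
      Real.cosh ((h - v) * a) / (Real.sqrt (2 * lam) * Real.sinh (h * a))
        - besselI0 (v * a) / (Real.sqrt (2 * lam) * Real.sinh (h * a) * besselI0 (h * a))
    (∀ v ∈ Set.Ioo (0 : ℝ) h,
        2 * v * deriv (deriv Q) v + 2 * deriv Q v - lam * v * Q v = - R v) ∧
      Q h = 0 := by
  intro a R Q
  have ha : 0 < a := Real.sqrt_pos.mpr (by positivity)
  have hlam_eq : lam = 2 * a ^ 2 := by
    rw [Real.sq_sqrt (by positivity)]
    ring
  have hsqrt : Real.sqrt (2 * lam) = 2 * a := by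
    rw [hlam_eq, show 2 * (2 * a ^ 2) = (2 * a) ^ 2 by ring, Real.sqrt_sq (by positivity)]
  have hsinh : Real.sinh (h * a) ≠ 0 := (Real.sinh_pos_iff.mpr (by positivity)).ne'
  have hI0 : besselI0 (h * a) ≠ 0 := (besselI0_pos _).ne'
  refine ⟨fun v hv => ?_, ?_⟩
  · have hode := cosh_sub_besselI0_ode (Q := Q)
      (A := (Real.sqrt (2 * lam) * Real.sinh (h * a))⁻¹)
      (B := (Real.sqrt (2 * lam) * Real.sinh (h * a) * besselI0 (h * a))⁻¹)
      (fun v => by simp only [Q]; ring) ha.ne' hv.1.ne'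
    rw [← hlam_eq, hsqrt] at hode
    rw [hode]
    simp only [R]
    field_simp
  · simp only [Q, sub_self, zero_mul, Real.cosh_zero]
    field_simp
    ring
end

section
/- For every λ > 0 and every real a ≥ 0, λ·∫₀^∞ e^{−λt}·e^{−a²/(2t)}/√(2πt) dt = √(λ/2)·e^{−a√(2λ)}. -/
/-!
Substituting `t = s²` turns the integral into `2 / √(2π) · ∫₀^∞ exp (-(λ s² + β / s²)) ds` with
`β = a² / 2`. Writing `β = λ c²`, the exponent is `λ (s - c/s)² + 2 λ c`, and the
Cauchy–Schlömilch substitution `u = s - c/s` gives `∫₀^∞ g (s - c/s) ds = ½ ∫ g` for every even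
integrable `g`: the Jacobian is `1 + c/s²`, and the inversion `s ↦ c/s`, which sends `s - c/s` to
its negative, shows that the weight `c/s²` contributes as much as the weight `1`. For the Gaussian
`g` this yields `√(π/λ)/2 · exp (-2 λ c)`, and `2 λ c = a √(2λ)`.
-/

open Real MeasureTheory Set

variable {E : Type*} [NormedAddCommGroup E] [NormedSpace ℝ E]

theorem integral_comp_sq_Ioi (g : ℝ → E) :
    ∫ s in Ioi 0, (2 * s) • g (s ^ 2) = ∫ t in Ioi 0, g t := by
  rw [← integral_comp_rpow_Ioi_of_pos (g := g) two_pos]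
  refine setIntegral_congr_fun measurableSet_Ioi fun s _ => ?_
  norm_num [rpow_two]

section ConstDiv

variable {c : ℝ}

theorem image_const_div_Ioi_zero (hc : 0 < c) : (c / ·) '' Ioi (0 : ℝ) = Ioi 0 := by
  ext y
  refine ⟨?_, fun hy => ⟨c / y, div_pos hc hy, div_div_cancel₀ hc.ne'⟩⟩
  rintro ⟨x, hx, rfl⟩
  exact div_pos hc hx

theorem integral_comp_const_div_Ioi (g : ℝ → E) (hc : 0 < c) :
    ∫ x in Ioi 0, (c / x ^ 2) • g (c / x) = ∫ x in Ioi 0, g x := by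
  have hderiv : ∀ x ∈ Ioi (0 : ℝ), HasDerivWithinAt (c / ·) (-(c / x ^ 2)) (Ioi 0) x :=
    fun x hx => by
      simpa [div_eq_mul_inv] using ((hasDerivAt_inv (ne_of_gt hx)).const_mul c).hasDerivWithinAt
  have hinj : InjOn (c / ·) (Ioi (0 : ℝ)) := fun x _ y _ h => by
    simpa [div_div_cancel₀ hc.ne'] using congrArg (c / ·) h
  have hsub := integral_image_eq_integral_abs_deriv_smul measurableSet_Ioi hderiv hinj g
  rw [image_const_div_Ioi_zero hc] at hsub
  rw [hsub]
  refine setIntegral_congr_fun measurableSet_Ioi fun x (hx : 0 < x) => ?_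
  rw [abs_neg, abs_of_pos (by positivity)]

theorem hasDerivAt_sub_const_div {x : ℝ} (hx : x ≠ 0) :
    HasDerivAt (fun s => s - c / s) (1 + c / x ^ 2) x := by
  have h := (hasDerivAt_id' x).fun_sub ((hasDerivAt_inv hx).const_mul c)
  simp only [← div_eq_mul_inv] at h
  exact h.congr_deriv (by ring)

theorem strictMonoOn_sub_const_div (hc : 0 ≤ c) : StrictMonoOn (fun s => s - c / s) (Ioi 0) := by
  intro x hx y _ hxy
  linarith [div_le_div_of_nonneg_left hc hx hxy.le]

theorem image_sub_const_div_Ioi_zero (hc : 0 < c) : (fun s => s - c / s) '' Ioi 0 = univ := by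
  refine eq_univ_of_forall fun u => ?_
  have hr : √(u ^ 2 + 4 * c) ^ 2 = u ^ 2 + 4 * c := sq_sqrt (by positivity)
  have hu : |u| < √(u ^ 2 + 4 * c) := by
    rw [← sqrt_sq_eq_abs]
    exact sqrt_lt_sqrt (sq_nonneg u) (by linarith)
  have hs : 0 < (u + √(u ^ 2 + 4 * c)) / 2 := by linarith [neg_abs_le u]
  have hdiv : c / ((u + √(u ^ 2 + 4 * c)) / 2) = (u + √(u ^ 2 + 4 * c)) / 2 - u := by
    rw [div_eq_iff hs.ne']
    linear_combination (-1 / 4) * hr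
  exact ⟨_, hs, by simp only [hdiv]; ring⟩

theorem integral_comp_sub_const_div_Ioi_of_even [CompleteSpace E] {f : ℝ → E}
    (hf : Integrable f) (heven : f.Even) (hc : 0 < c) :
    (2 : ℝ) • ∫ s in Ioi 0, f (s - c / s) = ∫ x, f x := by
  set φ : ℝ → ℝ := fun s => s - c / s
  have hderiv : ∀ x ∈ Ioi (0 : ℝ), HasDerivWithinAt φ (1 + c / x ^ 2) (Ioi 0) x :=
    fun x hx => (hasDerivAt_sub_const_div (ne_of_gt hx)).hasDerivWithinAt
  have hinj : InjOn φ (Ioi 0) := (strictMonoOn_sub_const_div hc.le).injOn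
  have hsub := integral_image_eq_integral_abs_deriv_smul measurableSet_Ioi hderiv hinj f
  rw [image_sub_const_div_Ioi_zero hc, Measure.restrict_univ] at hsub
  have hint : IntegrableOn (fun s => |1 + c / s ^ 2| • f (φ s)) (Ioi 0) := by
    rw [← integrableOn_image_iff_integrableOn_abs_deriv_smul measurableSet_Ioi hderiv hinj,
      image_sub_const_div_Ioi_zero hc]
    exact hf.integrableOn
  have hweight : ∀ s, |1 + c / s ^ 2| = 1 + c / s ^ 2 := fun s => abs_of_pos (by positivity)
  have hint_comp : IntegrableOn (fun s => f (φ s)) (Ioi 0) := by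
    have hmeas : Measurable fun s : ℝ => (1 + c / s ^ 2)⁻¹ := by fun_prop
    have hbdd :
        IntegrableOn (fun s => (1 + c / s ^ 2)⁻¹ • |1 + c / s ^ 2| • f (φ s)) (Ioi 0) :=
      hint.bdd_smul 1 hmeas.aestronglyMeasurable
        (ae_of_all _ fun s => by
          rw [norm_inv, Real.norm_eq_abs, hweight]
          exact inv_le_one_of_one_le₀ (le_add_of_nonneg_right (by positivity)))
    refine hbdd.congr_fun (fun s _ => ?_) measurableSet_Ioi
    dsimp only
    rw [hweight, smul_smul, inv_mul_cancel₀ (by positivity), one_smul]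
  have hinv : ∫ s in Ioi 0, (c / s ^ 2) • f (φ s) = ∫ s in Ioi 0, f (φ s) := by
    rw [← integral_comp_const_div_Ioi (fun s => f (φ s)) hc]
    refine setIntegral_congr_fun measurableSet_Ioi fun s (hs : 0 < s) => ?_
    simp only [φ, div_div_cancel₀ hc.ne', ← heven (s - c / s), neg_sub]
  have hexpand (s : ℝ) : |1 + c / s ^ 2| • f (φ s) = f (φ s) + (c / s ^ 2) • f (φ s) := by
    rw [hweight, add_smul, one_smul]
  have hint_weighted : IntegrableOn (fun s => (c / s ^ 2) • f (φ s)) (Ioi 0) :=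
    (hint.sub hint_comp).congr_fun (fun s _ => by rw [Pi.sub_apply, hexpand, add_sub_cancel_left])
      measurableSet_Ioi
  rw [hsub, setIntegral_congr_fun measurableSet_Ioi fun s _ => hexpand s,
    integral_add hint_comp hint_weighted, hinv, two_smul]

end ConstDiv

theorem integral_exp_neg_mul_sub_div_sq_Ioi {b c : ℝ} (hb : 0 < b) (hc : 0 ≤ c) :
    ∫ s in Ioi 0, exp (-b * (s - c / s) ^ 2) = √(π / b) / 2 := by
  rcases hc.eq_or_lt with rfl | hc
  · simpa using integral_gaussian_Ioi b
  · have := integral_comp_sub_const_div_Ioi_of_even (integrable_exp_neg_mul_sq hb)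
      (fun x => by simp only [neg_sq]) hc
    rw [integral_gaussian, smul_eq_mul] at this
    linarith

theorem integral_exp_neg_mul_sq_add_div_sq_Ioi {b β : ℝ} (hb : 0 < b) (hβ : 0 ≤ β) :
    ∫ s in Ioi 0, exp (-(b * s ^ 2 + β / s ^ 2)) =
      √(π / b) / 2 * exp (-(2 * √(b * β))) := by
  obtain ⟨c, hc, rfl⟩ : ∃ c, 0 ≤ c ∧ β = b * c ^ 2 :=
    ⟨√(β / b), sqrt_nonneg _, by rw [sq_sqrt (by positivity)]; field_simp⟩
  have hbc : √(b * (b * c ^ 2)) = b * c := by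
    rw [← mul_assoc, ← sq, ← mul_pow, sqrt_sq (by positivity)]
  rw [← integral_exp_neg_mul_sub_div_sq_Ioi hb hc, ← integral_mul_const, hbc]
  refine setIntegral_congr_fun measurableSet_Ioi fun s (hs : 0 < s) => ?_
  rw [← exp_add]
  congr 1
  field_simp
  ring

theorem stmt12 (lam a : ℝ) (hlam : 0 < lam) (ha : 0 ≤ a) :
    lam * ∫ t in Set.Ioi (0:ℝ),
        Real.exp (-lam * t) * Real.exp (-a ^ 2 / (2 * t)) / Real.sqrt (2 * Real.pi * t)
      = Real.sqrt (lam / 2) * Real.exp (-a * Real.sqrt (2 * lam)) := by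
  have hsub : ∀ s ∈ Ioi (0 : ℝ),
      (2 * s) • (exp (-lam * s ^ 2) * exp (-a ^ 2 / (2 * s ^ 2)) / √(2 * π * s ^ 2)) =
        2 / √(2 * π) * exp (-(lam * s ^ 2 + a ^ 2 / 2 / s ^ 2)) := by
    intro s (hs : 0 < s)
    rw [sqrt_mul (by positivity), sqrt_sq hs.le, ← exp_add, smul_eq_mul,
      show -lam * s ^ 2 + -a ^ 2 / (2 * s ^ 2) = -(lam * s ^ 2 + a ^ 2 / 2 / s ^ 2) by ring]
    field_simp
  have hexp : 2 * √(lam * (a ^ 2 / 2)) = a * √(2 * lam) := by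
    rw [show lam * (a ^ 2 / 2) = (a / 2) ^ 2 * (2 * lam) by ring, sqrt_mul (by positivity),
      sqrt_sq (by positivity)]
    ring
  have hcoef : lam * (2 / √(2 * π) * (√(π / lam) / 2)) = √(lam / 2) := by
    rw [sqrt_div' _ hlam.le, sqrt_mul zero_le_two, sqrt_div hlam.le]
    field_simp
    exact (sq_sqrt hlam.le).symm
  rw [← integral_comp_sq_Ioi, setIntegral_congr_fun measurableSet_Ioi hsub, integral_const_mul,
    integral_exp_neg_mul_sq_add_div_sq_Ioi hlam (by positivity), hexp, ← hcoef, neg_mul]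
  ring
end

section
/- For every β ∈ (0,1), t > 0, and x ∈ ℝ, the function p(z) = e^{−(x−z)²/(2t)}/√(2πt) + (2β−1)·sign(z)·e^{−(|x|+|z|)²/(2t)}/√(2πt) is nonnegative for all z ∈ ℝ and satisfies ∫_{−∞}^{∞} p(z) dz = 1. -/
/-!
The first summand of `p` is the density of `N(x, t)`, so it integrates to `1`. The second is odd in
`z`, so it integrates to `0`, and it is dominated by the first because `|2β - 1| ≤ 1`,
`|sign z| ≤ 1` and `|x - z| ≤ |x| + |z|`.
-/

open MeasureTheory ProbabilityTheory Real

@[fun_prop]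
lemma Real.measurable_sign : Measurable Real.sign :=
  Measurable.ite measurableSet_Iio measurable_const
    (Measurable.ite measurableSet_Ioi measurable_const measurable_const)

lemma Real.abs_sign_le_one (r : ℝ) : |Real.sign r| ≤ 1 := by
  rcases Real.sign_apply_eq r with h | h | h <;> simp [h]

theorem integral_eq_zero_of_odd {G E : Type*} [MeasurableSpace G] [NormedAddCommGroup E]
    [NormedSpace ℝ E] [AddGroup G] [MeasurableNeg G] (μ : Measure G) [μ.IsNegInvariant]
    {f : G → E} (hf : ∀ x, f (-x) = -f x) : ∫ x, f x ∂μ = 0 := by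
  have h : ∫ x, f (-x) ∂μ = -∫ x, f x ∂μ := by simp only [hf, integral_neg]
  rw [integral_neg_eq_self f μ] at h
  have h2 : (2 : ℝ) • ∫ x, f x ∂μ = 0 := by
    rw [two_smul]
    nth_rw 1 [h]
    exact neg_add_cancel _
  exact (smul_eq_zero.1 h2).resolve_left two_ne_zero

lemma gaussianPDFReal_toNNReal {t : ℝ} (ht : 0 ≤ t) (x z : ℝ) :
    gaussianPDFReal x t.toNNReal z = exp (-(x - z) ^ 2 / (2 * t)) / √(2 * π * t) := by
  rw [gaussianPDFReal, Real.coe_toNNReal t ht, sub_sq_comm z x, inv_mul_eq_div]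

lemma exp_neg_sq_abs_add_div_le (x z : ℝ) {c : ℝ} (hc : 0 ≤ c) :
    exp (-(|x| + |z|) ^ 2 / c) ≤ exp (-(x - z) ^ 2 / c) := by
  have h : (x - z) ^ 2 ≤ (|x| + |z|) ^ 2 := by
    rw [← sq_abs (x - z)]
    exact pow_le_pow_left₀ (abs_nonneg _) (abs_sub x z) 2
  gcongr

noncomputable def skewGaussianCorrection (a t x z : ℝ) : ℝ :=
  a * Real.sign z * exp (-(|x| + |z|) ^ 2 / (2 * t)) / √(2 * π * t)

lemma skewGaussianCorrection_neg (a t x z : ℝ) :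
    skewGaussianCorrection a t x (-z) = -skewGaussianCorrection a t x z := by
  simp only [skewGaussianCorrection, Real.sign_neg, abs_neg]
  ring

lemma abs_skewGaussianCorrection_le (a x z : ℝ) {t : ℝ} (ht : 0 ≤ t) :
    |skewGaussianCorrection a t x z| ≤ |a| * gaussianPDFReal x t.toNNReal z := by
  rw [gaussianPDFReal_toNNReal ht, skewGaussianCorrection, abs_div, abs_mul, abs_mul,
    abs_of_nonneg (exp_nonneg _), abs_of_nonneg (sqrt_nonneg _), mul_assoc, mul_div_assoc]
  gcongr
  exact (mul_le_of_le_one_left (exp_nonneg _) (Real.abs_sign_le_one z)).trans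
    (exp_neg_sq_abs_add_div_le x z (by positivity))

lemma integrable_skewGaussianCorrection (a x : ℝ) {t : ℝ} (ht : 0 ≤ t) :
    Integrable (skewGaussianCorrection a t x) := by
  refine ((integrable_gaussianPDFReal x t.toNNReal).const_mul |a|).mono' ?_
    (.of_forall fun z => abs_skewGaussianCorrection_le a x z ht)
  unfold skewGaussianCorrection
  fun_prop

lemma integral_skewGaussianCorrection (a t x : ℝ) :
    ∫ z, skewGaussianCorrection a t x z = 0 :=
  integral_eq_zero_of_odd volume (skewGaussianCorrection_neg a t x)

lemma gaussianPDFReal_add_skewGaussianCorrection_nonneg {a t : ℝ} (ha : |a| ≤ 1) (ht : 0 ≤ t)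
    (x z : ℝ) : 0 ≤ gaussianPDFReal x t.toNNReal z + skewGaussianCorrection a t x z := by
  have hg := gaussianPDFReal_nonneg x t.toNNReal z
  have hdom : |skewGaussianCorrection a t x z| ≤ gaussianPDFReal x t.toNNReal z :=
    (abs_skewGaussianCorrection_le a x z ht).trans (mul_le_of_le_one_left hg ha)
  linarith [neg_abs_le (skewGaussianCorrection a t x z)]

lemma integral_gaussianPDFReal_add_skewGaussianCorrection (a x : ℝ) {t : ℝ} (ht : 0 < t) :
    ∫ z, (gaussianPDFReal x t.toNNReal z + skewGaussianCorrection a t x z) = 1 := by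
  rw [integral_add (integrable_gaussianPDFReal x _) (integrable_skewGaussianCorrection a x ht.le),
    integral_gaussianPDFReal_eq_one x (by simpa using ht), integral_skewGaussianCorrection,
    add_zero]

theorem stmt13 (β t x : ℝ) (hβ : β ∈ Set.Ioo (0:ℝ) 1) (ht : 0 < t) :
    let p : ℝ → ℝ := fun z =>
      Real.exp (-(x - z) ^ 2 / (2 * t)) / Real.sqrt (2 * Real.pi * t)
        + (2 * β - 1) * Real.sign z * Real.exp (-(|x| + |z|) ^ 2 / (2 * t))
            / Real.sqrt (2 * Real.pi * t)
    (∀ z : ℝ, 0 ≤ p z) ∧ (∫ z : ℝ, p z) = 1 := by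
  intro p
  have hp : p = fun z =>
      gaussianPDFReal x t.toNNReal z + skewGaussianCorrection (2 * β - 1) t x z := by
    funext z
    rw [gaussianPDFReal_toNNReal ht.le]
    rfl
  have ha : |2 * β - 1| ≤ 1 := abs_le.2 ⟨by linarith [hβ.1], by linarith [hβ.2]⟩
  rw [hp]
  exact ⟨gaussianPDFReal_add_skewGaussianCorrection_nonneg ha ht.le x,
    integral_gaussianPDFReal_add_skewGaussianCorrection _ x ht⟩
end

section
/- Fix λ > 0, η > 0, h > 0, q ∈ ℝ. Define φ_δ(y) = e^{(q−y)√(2λ)} + η·e^{−2h√(2λ)}·( e^{(q−y)√(2λ)} − e^{h√(2λ)}·e^{−|y−q−h|√(2λ)} ) / ( √(2λ)·(1 + (η/√(2λ))·(1 − e^{−2h√(2λ)})) ) for y ≥ q. Then φ_δ(q) = 1, φ_δ satisfies (1/2)φ_δ''(y) − λ·φ_δ(y) = 0 for all y ∈ (q,∞) with y ≠ q+h, and the one-sided derivatives at q+h satisfy φ_δ'((q+h)+) − φ_δ'((q+h)−) = 2η·φ_δ(q+h). -/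
/-!
With `s = √(2λ)` and `c = q + h`, on each side of `c` the function `φ_δ` is a combination of
`e^{s(y - c)}` and `e^{-s(y - c)}`, so `φ_δ'' = s² φ_δ = 2λ φ_δ` away from `c`. At `c` only the
kink of `e^{-s|y - c|}` contributes to the jump of `φ_δ'`, and the normalising constant in front
of it is chosen exactly so that this jump equals `2η φ_δ(c)`.
-/

open Real Set Filter Topology

noncomputable def expComb (k c α β z : ℝ) : ℝ :=
  α * exp (k * (z - c)) + β * exp (-(k * (z - c)))

section expComb

variable (k c α β : ℝ)

theorem hasDerivAt_expComb (z : ℝ) :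
    HasDerivAt (expComb k c α β) (expComb k c (k * α) (-(k * β)) z) z := by
  have hlin : HasDerivAt (fun z => k * (z - c)) k z := by
    simpa using ((hasDerivAt_id' z).sub_const c).const_mul k
  refine ((hlin.exp.const_mul α).add (hlin.neg.exp.const_mul β)).congr_deriv ?_
  simp only [expComb, Pi.neg_apply]
  ring

theorem deriv_expComb : deriv (expComb k c α β) = expComb k c (k * α) (-(k * β)) :=
  funext fun z => (hasDerivAt_expComb k c α β z).deriv

theorem deriv_deriv_expComb (z : ℝ) :
    deriv (deriv (expComb k c α β)) z = k ^ 2 * expComb k c α β z := by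
  rw [deriv_expComb, deriv_expComb]
  simp only [expComb]
  ring

theorem expComb_self : expComb k c α β c = α + β := by
  simp [expComb]

end expComb

theorem Filter.EventuallyEq.deriv_deriv_eq_of_expComb {f : ℝ → ℝ} {k c α β y : ℝ}
    (hf : f =ᶠ[𝓝 y] expComb k c α β) : deriv (deriv f) y = k ^ 2 * f y := by
  rw [hf.deriv.deriv_eq, deriv_deriv_expComb, hf.eq_of_nhds]

theorem derivWithin_eq_of_eqOn_expComb {f : ℝ → ℝ} {s : Set ℝ} {k c α β y : ℝ}
    (hs : UniqueDiffWithinAt ℝ s y) (hf : EqOn f (expComb k c α β) s) (hy : y ∈ s) :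
    derivWithin f s y = expComb k c (k * α) (-(k * β)) y :=
  ((hasDerivAt_expComb k c α β y).hasDerivWithinAt.congr hf (hf hy)).derivWithin hs

noncomputable def phiDelta (s η h q y : ℝ) : ℝ :=
  exp ((q - y) * s)
    + η * exp (-2 * h * s) * (exp ((q - y) * s) - exp (h * s) * exp (-|y - q - h| * s))
      / (s * (1 + (η / s) * (1 - exp (-2 * h * s))))

noncomputable def phiDeltaCoeff (s η h : ℝ) : ℝ :=
  η * exp (-2 * h * s) / (s * (1 + (η / s) * (1 - exp (-2 * h * s))))

section phiDelta

variable (s η h q : ℝ)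

local notation "C" => phiDeltaCoeff s η h

theorem phiDelta_eq (y : ℝ) :
    phiDelta s η h q y = (1 + C) * exp (-(h * s)) * exp (-(s * (y - (q + h))))
      - C * exp (h * s) * exp (-(s * |y - (q + h)|)) := by
  have hshift : exp ((q - y) * s) = exp (-(h * s)) * exp (-(s * (y - (q + h)))) := by
    rw [← exp_add]
    ring_nf
  simp only [phiDelta, phiDeltaCoeff, hshift, ← sub_sub, neg_mul, mul_comm s]
  ring

theorem phiDelta_eqOn_Iic :
    EqOn (phiDelta s η h q)
      (expComb s (q + h) (-(C * exp (h * s))) ((1 + C) * exp (-(h * s)))) (Iic (q + h)) := by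
  intro y hy
  rw [phiDelta_eq, abs_of_nonpos (sub_nonpos.2 hy), expComb]
  ring_nf

theorem phiDelta_eqOn_Ici :
    EqOn (phiDelta s η h q)
      (expComb s (q + h) 0 ((1 + C) * exp (-(h * s)) - C * exp (h * s))) (Ici (q + h)) := by
  intro y hy
  rw [phiDelta_eq, abs_of_nonneg (sub_nonneg.2 hy), expComb]
  ring_nf

theorem phiDelta_self (hh : 0 ≤ h) : phiDelta s η h q q = 1 := by
  rw [phiDelta_eq, sub_add_cancel_left, abs_neg, abs_of_nonneg hh, mul_neg, neg_neg,
    mul_comm s h]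
  have huv : exp (h * s) * exp (-(h * s)) = 1 := by rw [← exp_add, add_neg_cancel, exp_zero]
  linear_combination huv

theorem deriv_deriv_phiDelta {y : ℝ} (hy : y ≠ q + h) :
    deriv (deriv (phiDelta s η h q)) y = s ^ 2 * phiDelta s η h q y := by
  rcases hy.lt_or_gt with hlt | hgt
  · exact Filter.EventuallyEq.deriv_deriv_eq_of_expComb <| eventuallyEq_of_mem
      (Iio_mem_nhds hlt) fun _ hz => phiDelta_eqOn_Iic s η h q (mem_Iic_of_Iio hz)
  · exact Filter.EventuallyEq.deriv_deriv_eq_of_expComb <| eventuallyEq_of_mem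
      (Ioi_mem_nhds hgt) fun _ hz => phiDelta_eqOn_Ici s η h q (mem_Ici_of_Ioi hz)

theorem derivWithin_Ici_sub_derivWithin_Iic_phiDelta
    (hD : s * (1 + (η / s) * (1 - exp (-2 * h * s))) ≠ 0) :
    derivWithin (phiDelta s η h q) (Ici (q + h)) (q + h)
        - derivWithin (phiDelta s η h q) (Iic (q + h)) (q + h)
      = 2 * η * phiDelta s η h q (q + h) := by
  rw [derivWithin_eq_of_eqOn_expComb (uniqueDiffOn_Ici _ _ self_mem_Ici)
      (phiDelta_eqOn_Ici s η h q) self_mem_Ici,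
    derivWithin_eq_of_eqOn_expComb (uniqueDiffOn_Iic _ _ self_mem_Iic)
      (phiDelta_eqOn_Iic s η h q) self_mem_Iic,
    phiDelta_eqOn_Iic s η h q self_mem_Iic, expComb_self, expComb_self, expComb_self]
  have hC : C * (s * (1 + (η / s) * (1 - exp (-2 * h * s)))) = η * exp (-2 * h * s) :=
    div_mul_cancel₀ _ hD
  have hv : exp (-2 * h * s) = exp (-(h * s)) ^ 2 := by rw [← exp_nat_mul]; ring_nf
  have huv : exp (h * s) * exp (-(h * s)) = 1 := by rw [← exp_add, add_neg_cancel, exp_zero]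
  have hs : s ≠ 0 := left_ne_zero_of_mul hD
  rw [hv, mul_add, mul_one, ← mul_assoc, mul_div_cancel₀ _ hs] at hC
  linear_combination (2 * exp (h * s)) * hC + 2 * η * exp (-(h * s)) * (1 + C) * huv

end phiDelta

theorem stmt15 (lam η h q : ℝ) (hlam : 0 < lam) (hη : 0 < η) (hh : 0 < h) :
    let s := Real.sqrt (2 * lam)
    let φ : ℝ → ℝ := fun y =>
      Real.exp ((q - y) * s)
        + η * Real.exp (-2 * h * s)
            * (Real.exp ((q - y) * s) - Real.exp (h * s) * Real.exp (-|y - q - h| * s))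
            / (s * (1 + (η / s) * (1 - Real.exp (-2 * h * s))))
    φ q = 1 ∧
      (∀ y, q < y → y ≠ q + h → (1/2) * deriv (deriv φ) y - lam * φ y = 0) ∧
      derivWithin φ (Set.Ici (q + h)) (q + h) - derivWithin φ (Set.Iic (q + h)) (q + h)
        = 2 * η * φ (q + h) := by
  intro s φ
  have hs : 0 < s := sqrt_pos.2 (by positivity)
  have hD : s * (1 + (η / s) * (1 - exp (-2 * h * s))) ≠ 0 := by
    have : exp (-2 * h * s) < 1 := exp_lt_one_iff.2 (by nlinarith)
    have : 0 < η / s * (1 - exp (-2 * h * s)) := mul_pos (div_pos hη hs) (by linarith)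
    positivity
  refine ⟨phiDelta_self s η h q hh.le, fun y _ hy => ?_,
    derivWithin_Ici_sub_derivWithin_Iic_phiDelta s η h q hD⟩
  change 1 / 2 * deriv (deriv (phiDelta s η h q)) y - lam * phiDelta s η h q y = 0
  rw [deriv_deriv_phiDelta s η h q hy, sq_sqrt (by positivity)]
  ring
end

section
/- Fix λ > 0, η > 0, h > 0, q ∈ ℝ. Define ψ_δ(y) = e^{(y−q)√(2λ)} + (η/√(2λ))·( e^{(y−q)√(2λ)} − e^{h√(2λ)}·e^{−|y−q−h|√(2λ)} ) and φ_δ as the decreasing fundamental solution φ_δ(y) = e^{(q−y)√(2λ)} + η·e^{−2h√(2λ)}·( e^{(q−y)√(2λ)} − e^{h√(2λ)}·e^{−|y−q−h|√(2λ)} )/( √(2λ)(1 + (η/√(2λ))(1 − e^{−2h√(2λ)})) ). Then the Wronskian at q satisfies ψ_δ'(q) − φ_δ'(q) = 2√(2λ)·(1 + η/√(2λ)) / (1 + (η/√(2λ))·(1 − e^{−2h√(2λ)})). -/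
open Real

theorem hasDerivAt_exp_sub_mul_self (a s : ℝ) :
    HasDerivAt (fun y => exp ((y - a) * s)) s a := by
  simpa using (((hasDerivAt_id a).sub_const a).mul_const s).exp

theorem hasDerivAt_exp_sub_mul_self' (a s : ℝ) :
    HasDerivAt (fun y => exp ((a - y) * s)) (-s) a := by
  simpa using (((hasDerivAt_const a a).sub (hasDerivAt_id a)).mul_const s).exp

-- Left of the kink at `a + h` the function coincides with `y ↦ exp ((y - a) * s)`.
theorem hasDerivAt_exp_mul_exp_neg_abs {a h : ℝ} (s : ℝ) (hh : 0 < h) :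
    HasDerivAt (fun y => exp (h * s) * exp (-|y - a - h| * s)) s a := by
  refine (hasDerivAt_exp_sub_mul_self a s).congr_of_eventuallyEq ?_
  filter_upwards [Iio_mem_nhds (show a < a + h by linarith)] with y hy
  rw [abs_of_neg (by linarith [Set.mem_Iio.mp hy]), ← exp_add]
  ring_nf

theorem stmt16 (lam η h q : ℝ) (hlam : 0 < lam) (hη : 0 < η) (hh : 0 < h) :
    let s := Real.sqrt (2 * lam)
    let ψ : ℝ → ℝ := fun y =>
      Real.exp ((y - q) * s)
        + (η / s) * (Real.exp ((y - q) * s) - Real.exp (h * s) * Real.exp (-|y - q - h| * s))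
    let φ : ℝ → ℝ := fun y =>
      Real.exp ((q - y) * s)
        + η * Real.exp (-2 * h * s)
            * (Real.exp ((q - y) * s) - Real.exp (h * s) * Real.exp (-|y - q - h| * s))
            / (s * (1 + (η / s) * (1 - Real.exp (-2 * h * s))))
    deriv ψ q - deriv φ q
      = 2 * s * (1 + η / s) / (1 + (η / s) * (1 - Real.exp (-2 * h * s))) := by
  intro s ψ φ
  set E := exp (-2 * h * s)
  set D := 1 + η / s * (1 - E)
  have hs : 0 < s := sqrt_pos.mpr (by linarith)
  have hE : E < 1 := exp_lt_one_iff.mpr (by nlinarith)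
  have hD : 0 < D := by
    have : 0 ≤ η / s * (1 - E) := mul_nonneg (div_pos hη hs).le (by linarith)
    linarith
  have hkink := hasDerivAt_exp_mul_exp_neg_abs s hh (a := q)
  have hψ : HasDerivAt ψ s q :=
    ((hasDerivAt_exp_sub_mul_self q s).add
      (((hasDerivAt_exp_sub_mul_self q s).sub hkink).const_mul (η / s))).congr_deriv (by ring)
  have hφ : HasDerivAt φ (-s - 2 * η * E / D) q :=
    ((hasDerivAt_exp_sub_mul_self' q s).add
      ((((hasDerivAt_exp_sub_mul_self' q s).sub hkink).const_mul (η * E)).div_const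
        (s * D))).congr_deriv (by field_simp; ring)
  rw [hψ.deriv, hφ.deriv]
  field_simp
  simp only [D]
  field_simp
  ring
end
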